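/- arXiv:2209.02286 — 3 statements merged into one kernel-verified Lean document; each statement's English description precedes it below -/
import Mathlib

section
/- Let d ≥ 2 be an integer and r > 0. A function φ : closure(B^d_r) → ℂ is smooth on the closed ball closure(B^d_r) and radially symmetric (i.e., φ(Rx) = φ(x) for all rotations R ∈ SO(d) and all x) if and only if there exists f ∈ C^∞_ev([0,r]) such that φ(x) = f(|x|) for all x ∈ closure(B^d_r). -/
open MeasureTheory Metric Set

noncomputable section

/-- `f ∈ C^∞_ev([0,r])`: smooth on `[0,r]` (one-sided derivatives at the endpoints)
with all odd-order derivatives vanishing at `0`. -/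
def SmoothEvenOn (r : ℝ) (f : ℝ → ℂ) : Prop :=
  ContDiffOn ℝ (⊤ : ℕ∞) f (Icc 0 r) ∧
    ∀ n : ℕ, iteratedDerivWithin (2 * n + 1) f (Icc 0 r) 0 = 0

/-- `f ∈ C^∞_ev([0,∞))`. -/
def SmoothEvenIci (f : ℝ → ℂ) : Prop :=
  ContDiffOn ℝ (⊤ : ℕ∞) f (Ici 0) ∧
    ∀ n : ℕ, iteratedDerivWithin (2 * n + 1) f (Ici 0) 0 = 0

/-- `g j = D^j f` on `[0,r]`: each `g (j+1)` is the smooth even extension of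
`ρ ↦ ρ⁻¹ (g j)'(ρ)`. -/
def DIter (r : ℝ) (f : ℝ → ℂ) (g : ℕ → ℝ → ℂ) : Prop :=
  g 0 = f ∧ ∀ j : ℕ, SmoothEvenOn r (g (j + 1)) ∧
    ∀ ρ ∈ Ioc (0 : ℝ) r, g (j + 1) ρ = ρ⁻¹ * derivWithin (g j) (Icc 0 r) ρ

/-- `g j = D^j f` on `[0,∞)`. -/
def DIterIci (f : ℝ → ℂ) (g : ℕ → ℝ → ℂ) : Prop :=
  g 0 = f ∧ ∀ j : ℕ, SmoothEvenIci (g (j + 1)) ∧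
    ∀ ρ ∈ Ioi (0 : ℝ), g (j + 1) ρ = ρ⁻¹ * derivWithin (g j) (Ici 0) ρ

/-- Partial derivative `∂ᵢ` within the closed ball of radius `r`. -/
def pderivB (d : ℕ) (r : ℝ) (i : Fin d) (φ : EuclideanSpace ℝ (Fin d) → ℂ) :
    EuclideanSpace ℝ (Fin d) → ℂ :=
  fun x => fderivWithin ℝ φ (closedBall 0 r) x (EuclideanSpace.single i 1)

/-- `∂_{i₁} ⋯ ∂_{i_n}` within the closed ball, for a list of indices `[i₁,…,i_n]`. -/
def pderivList (d : ℕ) (r : ℝ) (I : List (Fin d)) (φ : EuclideanSpace ℝ (Fin d) → ℂ) :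
    EuclideanSpace ℝ (Fin d) → ℂ :=
  I.foldr (pderivB d r) φ

/-- `∂^α` within the closed ball, for a multi-index `α`. -/
def pderivMulti (d : ℕ) (r : ℝ) (α : Fin d → ℕ) (φ : EuclideanSpace ℝ (Fin d) → ℂ) :
    EuclideanSpace ℝ (Fin d) → ℂ :=
  pderivList d r ((List.finRange d).flatMap fun i => List.replicate (α i) i) φ

/-- Global partial derivative `∂ᵢ` on `ℝ^d`. -/
def pderivG (d : ℕ) (i : Fin d) (φ : EuclideanSpace ℝ (Fin d) → ℂ) :
    EuclideanSpace ℝ (Fin d) → ℂ :=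
  fun x => fderiv ℝ φ x (EuclideanSpace.single i 1)

def pderivListG (d : ℕ) (I : List (Fin d)) (φ : EuclideanSpace ℝ (Fin d) → ℂ) :
    EuclideanSpace ℝ (Fin d) → ℂ :=
  I.foldr (pderivG d) φ

/-- Global `∂^α` on `ℝ^d`, for a multi-index `α`. -/
def pderivMultiG (d : ℕ) (α : Fin d → ℕ) (φ : EuclideanSpace ℝ (Fin d) → ℂ) :
    EuclideanSpace ℝ (Fin d) → ℂ :=
  pderivListG d ((List.finRange d).flatMap fun i => List.replicate (α i) i) φ

/-- The Laplace operator on real-valued functions on `ℝ^d` (used on polynomials). -/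
def lap (d : ℕ) (ψ : EuclideanSpace ℝ (Fin d) → ℝ) : EuclideanSpace ℝ (Fin d) → ℝ :=
  fun x => ∑ i : Fin d,
    fderiv ℝ (fun y => fderiv ℝ ψ y (EuclideanSpace.single i 1)) x (EuclideanSpace.single i 1)

/-- The monomial `x ↦ x^α`. -/
def mono (d : ℕ) (α : Fin d → ℕ) : EuclideanSpace ℝ (Fin d) → ℝ :=
  fun x => ∏ i : Fin d, (x i) ^ (α i)

/-- `p^j_I(x) = (1/(2^j j!)) Δ^j (x_{i₁}⋯x_{i_n})` for a `d`-index `I` of length `n`. -/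
def pP (d n : ℕ) (j : ℕ) (I : Fin n → Fin d) : EuclideanSpace ℝ (Fin d) → ℝ :=
  fun x => (1 / (2 ^ j * (Nat.factorial j)) : ℝ) *
    (lap d)^[j] (fun y => ∏ k : Fin n, y (I k)) x

/-- Multi-indices `α ∈ ℕ₀^d` of length exactly `n`. -/
def multiIndices (d n : ℕ) : Finset (Fin d → ℕ) :=
  (Fintype.piFinset fun _ : Fin d => Finset.range (n + 1)).filter fun α => ∑ i, α i = n

/-- Multi-indices `α ∈ ℕ₀^d` of length at most `k`. -/
def multiIndicesLe (d k : ℕ) : Finset (Fin d → ℕ) :=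
  (Fintype.piFinset fun _ : Fin d => Finset.range (k + 1)).filter fun α => ∑ i, α i ≤ k

/-!
For `d ≥ 2` the group `SO(d)` acts transitively on every sphere, so an `SO(d)`-invariant `φ`
is `f ‖x‖` with `f ρ = φ (ρ e)` for a unit vector `e`. This `f` is smooth near `0` and even
there (a rotation maps `e` to `-e`), so its odd derivatives vanish at `0`.

Conversely, the derivative of `x ↦ f ‖x‖` is `x ↦ g ‖x‖ ⟪x, ·⟫` with `g ρ = ρ⁻¹ f'(ρ)`.
Hadamard's lemma writes `g ρ = ∫₀¹ f''(tρ) dt`, whose `k`-th derivative is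
`∫₀¹ tᵏ f⁽ᵏ⁺²⁾(tρ) dt`; hence `g` is again smooth with vanishing odd derivatives at `0`, and
smoothness of `x ↦ f ‖x‖` follows by induction on the order.
-/

open scoped ContDiff

section Rotations

variable {E : Type*} [NormedAddCommGroup E] [InnerProductSpace ℝ E] [FiniteDimensional ℝ E]

theorem det_reflection_orthogonal_span_singleton {v : E} (hv : v ≠ 0) :
    LinearMap.det ((ℝ ∙ v)ᗮ.reflection.toLinearEquiv : E →ₗ[ℝ] E) = -1 := by
  rw [Submodule.det_reflection, Submodule.orthogonal_orthogonal, finrank_span_singleton hv,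
    pow_one]

theorem exists_linearIsometryEquiv_det_eq_one_apply_eq (hE : 2 ≤ Module.finrank ℝ E) {x y : E}
    (hxy : ‖x‖ = ‖y‖) :
    ∃ T : E ≃ₗᵢ[ℝ] E, LinearMap.det (T.toLinearEquiv : E →ₗ[ℝ] E) = 1 ∧ T x = y := by
  rcases eq_or_ne x y with rfl | hne
  · exact ⟨LinearIsometryEquiv.refl ℝ E, LinearMap.det_id, rfl⟩
  -- the reflection exchanging `x` and `y` has determinant `-1`; composing it with a reflection
  -- in a hyperplane through `x` (which exists as `dim E ≥ 2`) fixes the sign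
  obtain ⟨v, hv, hv0⟩ : ∃ v ∈ (ℝ ∙ x)ᗮ, v ≠ 0 := by
    refine Submodule.exists_mem_ne_zero_of_ne_bot fun h => ?_
    have hsum := (ℝ ∙ x).finrank_add_finrank_orthogonal
    rw [h, finrank_bot] at hsum
    have hx := finrank_span_le_card (R := ℝ) ({x} : Set E)
    rw [Set.toFinset_singleton, Finset.card_singleton] at hx
    omega
  have hxv : x ∈ (ℝ ∙ v)ᗮ := by
    rw [Submodule.mem_orthogonal_singleton_iff_inner_right, real_inner_comm]
    exact Submodule.mem_orthogonal_singleton_iff_inner_right.1 hv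
  refine ⟨(ℝ ∙ v)ᗮ.reflection.trans (ℝ ∙ (x - y))ᗮ.reflection, ?_, ?_⟩
  · rw [LinearIsometryEquiv.toLinearEquiv_trans, LinearEquiv.coe_trans, LinearMap.det_comp,
      det_reflection_orthogonal_span_singleton hv0,
      det_reflection_orthogonal_span_singleton (sub_ne_zero.2 hne)]
    norm_num
  · simp [Submodule.reflection_mem_subspace_eq_self hxv, Submodule.reflection_sub hxy]

end Rotations

section Matrices

variable {d : ℕ}

theorem Matrix.exists_specialOrthogonalGroup_toEuclideanLin_apply_eq (hd : 2 ≤ d)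
    {x y : EuclideanSpace ℝ (Fin d)} (hxy : ‖x‖ = ‖y‖) :
    ∃ R : Matrix.specialOrthogonalGroup (Fin d) ℝ,
      Matrix.toEuclideanLin (R : Matrix (Fin d) (Fin d) ℝ) x = y := by
  obtain ⟨T, hdet, hT⟩ := exists_linearIsometryEquiv_det_eq_one_apply_eq
    (by rwa [finrank_euclideanSpace_fin]) hxy
  let b := (EuclideanSpace.basisFun (Fin d) ℝ).toBasis
  refine ⟨⟨LinearMap.toMatrix b b T.toLinearEquiv,
    Matrix.mem_specialOrthogonalGroup_iff.2 ⟨T.toMatrix_mem_unitaryGroup _ _, ?_⟩⟩, ?_⟩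
  · rwa [LinearMap.det_toMatrix]
  · rw [Matrix.toEuclideanLin_eq_toLin_orthonormal, Matrix.toLin_toMatrix]
    exact hT

theorem Matrix.norm_toEuclideanLin_of_mem_orthogonalGroup {R : Matrix (Fin d) (Fin d) ℝ}
    (hR : R ∈ Matrix.orthogonalGroup (Fin d) ℝ) (x : EuclideanSpace ℝ (Fin d)) :
    ‖Matrix.toEuclideanLin R x‖ = ‖x‖ := by
  have hU : Matrix.toEuclideanCLM (n := Fin d) (𝕜 := ℝ) R ∈ unitary _ := Unitary.map_mem _ hR
  exact ContinuousLinearMap.norm_map_of_mem_unitary hU x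

end Matrices

section DerivSequence

variable {𝕜 : Type*} [NontriviallyNormedField 𝕜] {F : Type*} [NormedAddCommGroup F]
  [NormedSpace 𝕜 F] {s : Set 𝕜}

theorem ContDiffOn.hasDerivWithinAt_iteratedDerivWithin {f : 𝕜 → F} (hf : ContDiffOn 𝕜 ∞ f s)
    (hs : UniqueDiffOn 𝕜 s) (j : ℕ) :
    ∀ x ∈ s, HasDerivWithinAt (iteratedDerivWithin j f s) (iteratedDerivWithin (j + 1) f s x)
      s x := by
  intro x hx
  rw [iteratedDerivWithin_succ]
  exact (hf.differentiableOn_iteratedDerivWithin (WithTop.coe_lt_coe.2 (ENat.natCast_lt_top j))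
    hs x hx).hasDerivWithinAt

variable {G : ℕ → 𝕜 → F}

theorem iteratedDerivWithin_eq_of_hasDerivWithinAt_succ (hs : UniqueDiffOn 𝕜 s)
    (hG : ∀ k, ∀ x ∈ s, HasDerivWithinAt (G k) (G (k + 1) x) s x) (m : ℕ) :
    ∀ k, ∀ x ∈ s, iteratedDerivWithin m (G k) s x = G (k + m) x := by
  induction m with
  | zero => simp
  | succ m ih =>
    intro k x hx
    rw [iteratedDerivWithin_succ', iteratedDerivWithin_congr
      (fun y hy => (hG k y hy).derivWithin (hs y hy)) hx, ih (k + 1) x hx, add_right_comm,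
      add_assoc]

theorem contDiffOn_of_hasDerivWithinAt_succ (hs : UniqueDiffOn 𝕜 s)
    (hG : ∀ k, ∀ x ∈ s, HasDerivWithinAt (G k) (G (k + 1) x) s x) (k : ℕ) :
    ContDiffOn 𝕜 ∞ (G k) s :=
  contDiffOn_of_differentiableOn_deriv fun m _ =>
    DifferentiableOn.congr (fun x hx => (hG (k + m) x hx).differentiableWithinAt)
      (iteratedDerivWithin_eq_of_hasDerivWithinAt_succ hs hG m k)

end DerivSequence

section RealCalculus

variable {E : Type*} [NormedAddCommGroup E] [NormedSpace ℝ E]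

theorem iteratedDerivWithin_eq_zero_of_odd {u : ℝ → E} {s : Set ℝ} {m : ℕ} (hm : Odd m)
    (hs : UniqueDiffOn ℝ s) (hs₀ : 0 ∈ s) (hu : ContDiffAt ℝ m u 0)
    (heven : (fun x => u (-x)) =ᶠ[nhds 0] u) :
    iteratedDerivWithin m u s 0 = 0 := by
  rw [iteratedDerivWithin_eq_iteratedDeriv hs hu hs₀]
  have h := iteratedDeriv_comp_neg m u 0
  rw [heven.iteratedDeriv_eq, neg_zero, hm.neg_one_pow, neg_one_smul, eq_neg_iff_add_eq_zero,
    ← two_smul ℝ, smul_eq_zero] at h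
  exact h.resolve_left two_ne_zero

theorem Convex.norm_sub_sub_smul_le_of_hasDerivWithinAt {f f' f'' : ℝ → E} {s : Set ℝ}
    (hs : Convex ℝ s) (hf : ∀ x ∈ s, HasDerivWithinAt f (f' x) s x)
    (hf' : ∀ x ∈ s, HasDerivWithinAt f' (f'' x) s x) {M : ℝ} (hM : ∀ x ∈ s, ‖f'' x‖ ≤ M)
    {a b : ℝ} (ha : a ∈ s) (hb : b ∈ s) :
    ‖f b - f a - (b - a) • f' a‖ ≤ M * |b - a| ^ 2 := by
  have hab : uIcc a b ⊆ s := hs.ordConnected.uIcc_subset ha hb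
  have hderiv : ∀ x ∈ uIcc a b,
      HasDerivWithinAt (fun y => f y - y • f' a) (f' x - f' a) (uIcc a b) x := fun x hx =>
    ((hf x (hab hx)).mono hab).sub (by simpa using (hasDerivWithinAt_id x _).smul_const (f' a))
  have hbound : ∀ x ∈ uIcc a b, ‖f' x - f' a‖ ≤ M * |b - a| := fun x hx => calc
    ‖f' x - f' a‖ ≤ M * ‖x - a‖ := (convex_uIcc a b).norm_image_sub_le_of_norm_hasDerivWithin_le
        (fun y hy => (hf' y (hab hy)).mono hab) (fun y hy => hM y (hab hy)) left_mem_uIcc hx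
    _ ≤ M * |b - a| := by
        rw [Real.norm_eq_abs]
        exact mul_le_mul_of_nonneg_left (abs_sub_left_of_mem_uIcc hx)
          ((norm_nonneg _).trans (hM a ha))
  have h := (convex_uIcc a b).norm_image_sub_le_of_norm_hasDerivWithin_le hderiv hbound
    left_mem_uIcc right_mem_uIcc
  rw [Real.norm_eq_abs, mul_assoc, ← sq] at h
  convert h using 2
  rw [sub_smul]
  abel

theorem hasDerivWithinAt_of_norm_sub_sub_smul_le {F : ℝ → E} {F' : E} {s : Set ℝ} {x M : ℝ}
    (h : ∀ y ∈ s, ‖F y - F x - (y - x) • F'‖ ≤ M * |y - x| ^ 2) :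
    HasDerivWithinAt F F' s x := by
  rw [hasDerivWithinAt_iff_isLittleO]
  refine Asymptotics.IsBigO.trans_isLittleO ?_
    ((Asymptotics.isLittleO_pow_sub_sub x one_lt_two).mono nhdsWithin_le_nhds)
  refine Asymptotics.IsBigO.of_bound M ?_
  filter_upwards [self_mem_nhdsWithin] with y hy
  simpa using h y hy

variable {r : ℝ}

theorem mul_mem_Icc_zero {t ρ : ℝ} (ht : t ∈ Icc (0 : ℝ) 1) (hρ : ρ ∈ Icc 0 r) :
    t * ρ ∈ Icc 0 r :=
  ⟨mul_nonneg ht.1 hρ.1, (mul_le_of_le_one_left hρ.1 ht.2).trans hρ.2⟩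

theorem intervalIntegrable_pow_smul_comp_mul {h : ℝ → E} (hh : ContinuousOn h (Icc 0 r))
    (k : ℕ) {ρ : ℝ} (hρ : ρ ∈ Icc 0 r) :
    IntervalIntegrable (fun t : ℝ => t ^ k • h (t * ρ)) volume 0 1 := by
  refine ContinuousOn.intervalIntegrable ?_
  rw [uIcc_of_le zero_le_one]
  exact (continuousOn_pow k).smul (hh.comp (by fun_prop) fun t ht => mul_mem_Icc_zero ht hρ)

theorem hasDerivWithinAt_integral_pow_smul_comp_mul {h h' h'' : ℝ → E}
    (hh : ∀ x ∈ Icc 0 r, HasDerivWithinAt h (h' x) (Icc 0 r) x)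
    (hh' : ∀ x ∈ Icc 0 r, HasDerivWithinAt h' (h'' x) (Icc 0 r) x)
    {M : ℝ} (hM : ∀ x ∈ Icc 0 r, ‖h'' x‖ ≤ M) (k : ℕ) {ρ : ℝ} (hρ : ρ ∈ Icc 0 r) :
    HasDerivWithinAt (fun ρ => ∫ t in (0 : ℝ)..1, t ^ k • h (t * ρ))
      (∫ t in (0 : ℝ)..1, t ^ (k + 1) • h' (t * ρ)) (Icc 0 r) ρ := by
  have hc : ContinuousOn h (Icc 0 r) := fun x hx => (hh x hx).continuousWithinAt
  have hc' : ContinuousOn h' (Icc 0 r) := fun x hx => (hh' x hx).continuousWithinAt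
  refine hasDerivWithinAt_of_norm_sub_sub_smul_le (M := M) fun ρ' hρ' => ?_
  have hpoint : ∀ t ∈ uIoc (0 : ℝ) 1,
      ‖t ^ k • h (t * ρ') - t ^ k • h (t * ρ) - (ρ' - ρ) • t ^ (k + 1) • h' (t * ρ)‖
        ≤ M * |ρ' - ρ| ^ 2 := by
    intro t ht
    rw [uIoc_of_le zero_le_one] at ht
    have ht' : t ∈ Icc (0 : ℝ) 1 := ⟨ht.1.le, ht.2⟩
    have htk : ‖t ^ k‖ ≤ 1 := by
      rw [norm_pow, Real.norm_of_nonneg ht'.1]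
      exact pow_le_one₀ ht'.1 ht'.2
    have hdist : |t * ρ' - t * ρ| ≤ |ρ' - ρ| := by
      rw [← mul_sub, abs_mul, abs_of_nonneg ht'.1]
      exact mul_le_of_le_one_left (abs_nonneg _) ht'.2
    have hrw : t ^ k • h (t * ρ') - t ^ k • h (t * ρ) - (ρ' - ρ) • t ^ (k + 1) • h' (t * ρ)
        = t ^ k • (h (t * ρ') - h (t * ρ) - (t * ρ' - t * ρ) • h' (t * ρ)) := by
      simp only [smul_sub, smul_smul]
      ring_nf
    have hM0 : 0 ≤ M := (norm_nonneg _).trans (hM ρ hρ)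
    calc _ = ‖t ^ k‖ * ‖h (t * ρ') - h (t * ρ) - (t * ρ' - t * ρ) • h' (t * ρ)‖ := by
          rw [hrw, norm_smul]
      _ ≤ 1 * (M * |t * ρ' - t * ρ| ^ 2) := by
          gcongr
          exact (convex_Icc 0 r).norm_sub_sub_smul_le_of_hasDerivWithinAt hh hh' hM
            (mul_mem_Icc_zero ht' hρ) (mul_mem_Icc_zero ht' hρ')
      _ ≤ M * |ρ' - ρ| ^ 2 := by
          rw [one_mul]
          gcongr
  have hint := intervalIntegral.norm_integral_le_of_norm_le_const hpoint
  rw [sub_zero, abs_one, mul_one] at hint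
  convert hint using 2
  have i₁ := intervalIntegrable_pow_smul_comp_mul hc k hρ'
  have i₂ := intervalIntegrable_pow_smul_comp_mul hc k hρ
  have i₃ : IntervalIntegrable (fun t : ℝ => (ρ' - ρ) • t ^ (k + 1) • h' (t * ρ)) volume 0 1 :=
    (intervalIntegrable_pow_smul_comp_mul hc' (k + 1) hρ).smul (ρ' - ρ)
  rw [← intervalIntegral.integral_smul, ← intervalIntegral.integral_sub i₁ i₂,
    ← intervalIntegral.integral_sub (i₁.sub i₂) i₃]

def hadamardIntegral (r : ℝ) (f : ℝ → E) (k : ℕ) (ρ : ℝ) : E :=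
  ∫ t in (0 : ℝ)..1, t ^ k • iteratedDerivWithin (k + 2) f (Icc 0 r) (t * ρ)

variable {f : ℝ → E}

theorem hasDerivWithinAt_hadamardIntegral (hr : 0 < r) (hf : ContDiffOn ℝ ∞ f (Icc 0 r))
    (k : ℕ) {ρ : ℝ} (hρ : ρ ∈ Icc 0 r) :
    HasDerivWithinAt (hadamardIntegral r f k) (hadamardIntegral r f (k + 1) ρ) (Icc 0 r) ρ := by
  have hD := hf.hasDerivWithinAt_iteratedDerivWithin (uniqueDiffOn_Icc hr)
  obtain ⟨M, hM⟩ := isCompact_Icc.exists_bound_of_continuousOn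
    (hf.continuousOn_iteratedDerivWithin (m := k + 4) (WithTop.coe_le_coe.2 le_top)
      (uniqueDiffOn_Icc hr))
  exact hasDerivWithinAt_integral_pow_smul_comp_mul (hD (k + 2)) (hD (k + 3)) hM k hρ

theorem hadamardIntegral_zero_eq_inv_smul_derivWithin [CompleteSpace E] (hr : 0 < r)
    (hf : ContDiffOn ℝ ∞ f (Icc 0 r)) (hf₀ : derivWithin f (Icc 0 r) 0 = 0) {ρ : ℝ}
    (hρ : ρ ∈ Ioc 0 r) :
    hadamardIntegral r f 0 ρ = ρ⁻¹ • derivWithin f (Icc 0 r) ρ := by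
  have hsub : Icc 0 ρ ⊆ Icc 0 r := Icc_subset_Icc le_rfl hρ.2
  have hD := hf.hasDerivWithinAt_iteratedDerivWithin (uniqueDiffOn_Icc hr)
  have hc := fun j => (hf.continuousOn_iteratedDerivWithin (m := j)
    (WithTop.coe_le_coe.2 le_top) (uniqueDiffOn_Icc hr)).mono hsub
  have hftc : ∫ s in (0 : ℝ)..ρ, iteratedDerivWithin 2 f (Icc 0 r) s
      = derivWithin f (Icc 0 r) ρ := by
    rw [intervalIntegral.integral_eq_sub_of_hasDeriv_right_of_le hρ.1.le (hc 1)
      (fun x hx => ((hD 1 x (hsub (Ioo_subset_Icc_self hx))).hasDerivAt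
        (Icc_mem_nhds hx.1 (hx.2.trans_le hρ.2))).hasDerivWithinAt)
      ((hc 2).intervalIntegrable_of_Icc hρ.1.le), iteratedDerivWithin_one, hf₀, sub_zero]
  simp only [hadamardIntegral, pow_zero, one_smul]
  rw [intervalIntegral.integral_comp_mul_right (iteratedDerivWithin 2 f (Icc 0 r)) hρ.1.ne']
  simp [hftc]

theorem hadamardIntegral_two_mul_add_one_zero
    (hf : ∀ n : ℕ, iteratedDerivWithin (2 * n + 1) f (Icc 0 r) 0 = 0) (n : ℕ) :
    hadamardIntegral r f (2 * n + 1) 0 = 0 := by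
  simp [hadamardIntegral, show 2 * n + 1 + 2 = 2 * (n + 1) + 1 by ring, hf]

end RealCalculus

theorem SmoothEvenOn.exists_smoothEvenOn_eq_inv_smul_derivWithin {r : ℝ} (hr : 0 < r)
    {f : ℝ → ℂ} (hf : SmoothEvenOn r f) :
    ∃ g : ℝ → ℂ, SmoothEvenOn r g ∧ ∀ ρ ∈ Ioc 0 r, g ρ = ρ⁻¹ • derivWithin f (Icc 0 r) ρ := by
  have hG := fun k ρ (hρ : ρ ∈ Icc 0 r) => hasDerivWithinAt_hadamardIntegral hr hf.1 k hρ
  refine ⟨hadamardIntegral r f 0,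
    ⟨contDiffOn_of_hasDerivWithinAt_succ (uniqueDiffOn_Icc hr) hG 0, fun n => ?_⟩,
    fun ρ hρ => hadamardIntegral_zero_eq_inv_smul_derivWithin hr hf.1 (by simpa using hf.2 0) hρ⟩
  rw [iteratedDerivWithin_eq_of_hasDerivWithinAt_succ (uniqueDiffOn_Icc hr) hG _ 0 0
    ⟨le_rfl, hr.le⟩, zero_add]
  exact hadamardIntegral_two_mul_add_one_zero hf.2 n

section Radial

variable {E : Type*} [NormedAddCommGroup E] [InnerProductSpace ℝ E]
  {F : Type*} [NormedAddCommGroup F] [NormedSpace ℝ F]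

theorem hasFDerivAt_norm_of_ne_zero {x : E} (hx : x ≠ 0) :
    HasFDerivAt (fun y : E => ‖y‖) (‖x‖⁻¹ • innerSL ℝ x) x := by
  have h := (hasStrictFDerivAt_norm_sq x).hasFDerivAt.sqrt (by positivity)
  simp only [Real.sqrt_sq (norm_nonneg _)] at h
  convert h using 1
  ext v
  simp [field]

theorem hasFDerivWithinAt_comp_norm {f g : ℝ → F} {r : ℝ}
    (hf : DifferentiableOn ℝ f (Icc 0 r)) (hf₀ : derivWithin f (Icc 0 r) 0 = 0)
    (hg : ∀ ρ ∈ Ioc 0 r, g ρ = ρ⁻¹ • derivWithin f (Icc 0 r) ρ) {x : E}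
    (hx : x ∈ closedBall 0 r) :
    HasFDerivWithinAt (fun y => f ‖y‖) ((innerSL ℝ x).smulRight (g ‖x‖)) (closedBall 0 r) x := by
  have hmaps : MapsTo (fun y : E => ‖y‖) (closedBall 0 r) (Icc 0 r) := fun y hy =>
    ⟨norm_nonneg y, mem_closedBall_zero_iff.1 hy⟩
  have hfx : HasDerivWithinAt f (derivWithin f (Icc 0 r) ‖x‖) (Icc 0 r) ‖x‖ :=
    (hf _ (hmaps hx)).hasDerivWithinAt
  rcases eq_or_ne x 0 with rfl | hx0
  · -- the norm is not differentiable at `0`, but `f ‖y‖ - f 0 = o(‖y‖)` since `f'(0) = 0`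
    rw [norm_zero, hf₀] at hfx
    have hnorm : Filter.Tendsto (fun y : E => ‖y‖) (nhdsWithin 0 (closedBall 0 r))
        (nhdsWithin 0 (Icc 0 r)) := by
      simpa using (continuous_norm.continuousWithinAt (x := (0 : E))).tendsto_nhdsWithin hmaps
    have ho := (hasDerivWithinAt_iff_isLittleO.1 hfx).comp_tendsto hnorm
    simp only [Function.comp_def, sub_zero, smul_zero] at ho
    replace ho := ho.trans_isBigO (Asymptotics.isBigO_refl (fun y : E => y) _).norm_left
    simp only [map_zero, ContinuousLinearMap.zero_smulRight]
    refine HasFDerivAtFilter.of_isLittleO ?_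
    simpa [Function.comp_def] using ho
  · refine (hfx.hasFDerivWithinAt.comp x (hasFDerivAt_norm_of_ne_zero hx0).hasFDerivWithinAt
      hmaps).congr_fderiv ?_
    ext v
    rw [hg _ ⟨norm_pos_iff.2 hx0, (hmaps hx).2⟩]
    simp [smul_smul, mul_comm]

theorem SmoothEvenOn.contDiffOn_comp_norm {r : ℝ} (hr : 0 < r) {f : ℝ → ℂ}
    (hf : SmoothEvenOn r f) : ContDiffOn ℝ ∞ (fun x : E => f ‖x‖) (closedBall 0 r) := by
  have hs : UniqueDiffOn ℝ (closedBall (0 : E) r) := uniqueDiffOn_convex (convex_closedBall 0 r)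
    ⟨0, mem_interior_iff_mem_nhds.2 (closedBall_mem_nhds 0 hr)⟩
  rw [contDiffOn_infty]
  intro n
  induction n generalizing f with
  | zero =>
    exact contDiffOn_zero.2 (hf.1.continuousOn.comp continuous_norm.continuousOn
      fun x hx => ⟨norm_nonneg x, mem_closedBall_zero_iff.1 hx⟩)
  | succ n ih =>
    obtain ⟨g, hg, hfg⟩ := hf.exists_smoothEvenOn_eq_inv_smul_derivWithin hr
    have hderiv := fun x (hx : x ∈ closedBall (0 : E) r) => hasFDerivWithinAt_comp_norm
      (hf.1.differentiableOn (by simp)) (by simpa using hf.2 0) hfg hx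
    rw [Nat.cast_add_one, contDiffOn_succ_iff_fderivWithin hs]
    refine ⟨fun x hx => (hderiv x hx).differentiableWithinAt, by simp, ?_⟩
    exact ((innerSL ℝ).contDiff.contDiffOn.smulRight (ih hg)).congr fun x hx =>
      (hderiv x hx).fderivWithin (hs x hx)

end Radial

theorem exists_smoothEvenOn_of_norm_eq {E : Type*} [NormedAddCommGroup E] [NormedSpace ℝ E]
    [Nontrivial E] {r : ℝ} (hr : 0 < r) {φ : E → ℂ} (hφ : ContDiffOn ℝ ∞ φ (closedBall 0 r))
    (hφr : ∀ x ∈ closedBall (0 : E) r, ∀ y, ‖y‖ = ‖x‖ → φ y = φ x) :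
    ∃ f : ℝ → ℂ, SmoothEvenOn r f ∧ ∀ x ∈ closedBall (0 : E) r, φ x = f ‖x‖ := by
  obtain ⟨e, he⟩ := exists_norm_eq E zero_le_one
  have hnorm (ρ : ℝ) : ‖ρ • e‖ = |ρ| := by rw [norm_smul, he, mul_one, Real.norm_eq_abs]
  have hmem : ∀ ρ ∈ Icc (-r) r, ρ • e ∈ closedBall (0 : E) r := fun ρ hρ => by
    rw [mem_closedBall_zero_iff, hnorm]
    exact abs_le.2 hρ
  have hline : ContDiff ℝ ∞ fun ρ : ℝ => ρ • e := contDiff_id.smul contDiff_const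
  refine ⟨fun ρ => φ (ρ • e), ⟨?_, fun n => ?_⟩, fun x hx => ?_⟩
  · exact hφ.comp hline.contDiffOn fun ρ hρ => hmem ρ ⟨by linarith [hρ.1], hρ.2⟩
  · refine iteratedDerivWithin_eq_zero_of_odd (odd_two_mul_add_one n) (uniqueDiffOn_Icc hr)
      ⟨le_rfl, hr.le⟩ ?_ ?_
    · have hφ₀ : ContDiffAt ℝ ∞ φ ((0 : ℝ) • e) := by
        rw [zero_smul]
        exact hφ.contDiffAt (closedBall_mem_nhds 0 hr)
      exact (hφ₀.comp 0 hline.contDiffAt).of_le (WithTop.coe_le_coe.2 le_top)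
    · filter_upwards [Icc_mem_nhds (neg_neg_of_pos hr) hr] with ρ hρ
      exact hφr _ (hmem ρ hρ) _ (by rw [hnorm, hnorm, abs_neg])
  · exact (hφr x hx _ (by rw [hnorm, abs_norm])).symm

/-- `φ` is smooth on the closed ball and radially symmetric iff
`φ(x) = f(|x|)` for some `f ∈ C^∞_ev([0,r])`. -/
theorem smooth_radial_iff_exists_even_profile (d : ℕ) (hd : 2 ≤ d) (r : ℝ) (hr : 0 < r)
    (φ : EuclideanSpace ℝ (Fin d) → ℂ) :
    (ContDiffOn ℝ (⊤ : ℕ∞) φ (closedBall 0 r) ∧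
      ∀ R : Matrix.specialOrthogonalGroup (Fin d) ℝ,
        ∀ x ∈ closedBall (0 : EuclideanSpace ℝ (Fin d)) r,
          φ (Matrix.toEuclideanLin (R : Matrix (Fin d) (Fin d) ℝ) x) = φ x) ↔
      ∃ f : ℝ → ℂ, SmoothEvenOn r f ∧
        ∀ x ∈ closedBall (0 : EuclideanSpace ℝ (Fin d)) r, φ x = f ‖x‖ := by
  constructor
  · rintro ⟨hφ, hrot⟩
    have : Nonempty (Fin d) := ⟨⟨0, by omega⟩⟩
    refine exists_smoothEvenOn_of_norm_eq hr hφ fun x hx y hxy => ?_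
    obtain ⟨R, rfl⟩ := Matrix.exists_specialOrthogonalGroup_toEuclideanLin_apply_eq hd hxy.symm
    exact hrot R x hx
  · rintro ⟨f, hf, hφf⟩
    refine ⟨(hf.contDiffOn_comp_norm hr).congr hφf, fun R x hx => ?_⟩
    have hR := Matrix.norm_toEuclideanLin_of_mem_orthogonalGroup
      (Matrix.mem_specialOrthogonalGroup_iff.1 R.2).1 x
    rw [hφf _ (by rwa [mem_closedBall_zero_iff, hR, ← mem_closedBall_zero_iff]), hφf x hx, hR]
end
end

section
/- Let r > 0 and let f ∈ C^∞_ev([0,r]). Then the function ρ ↦ ρ^{-1} f'(ρ), defined for ρ ∈ (0,r], extends to a function Df ∈ C^∞_ev([0,r]); that is, the operation D maps C^∞_ev([0,r]) into itself. -/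
open MeasureTheory Metric Set

noncomputable section

/-! `ρ⁻¹ f'(ρ) = ρ⁻¹ ∫₀^ρ f''` since `f'(0) = 0`. This is the first of the moments
`G k ρ = ρ^{-(k+1)} ∫₀^ρ t^k f^{(k+2)}(t) dt`, which extend continuously to `ρ = 0` by
`f^{(k+2)}(0) / (k+1)`. Integration by parts gives `(G k)' = G (k+1)` on `(0, r)`, hence on `[0, r]`
by continuity, so `G 0` is smooth on `[0, r]` with `k`-th derivative `G k`; at `0` the odd ones are
multiples of the odd derivatives `f^{(2n+3)}(0) = 0`. -/

open Filter Topology intervalIntegral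
open scoped ContDiff

section DerivChain

variable {𝕜 : Type*} [NontriviallyNormedField 𝕜] {E : Type*} [NormedAddCommGroup E]
  [NormedSpace 𝕜 E]

def IsDerivChainOn (G : ℕ → 𝕜 → E) (s : Set 𝕜) : Prop :=
  ∀ k, ∀ x ∈ s, HasDerivWithinAt (G k) (G (k + 1) x) s x

variable {G : ℕ → 𝕜 → E} {s : Set 𝕜}

theorem IsDerivChainOn.continuousOn (hG : IsDerivChainOn G s) (k : ℕ) :
    ContinuousOn (G k) s :=
  fun x hx ↦ (hG k x hx).continuousWithinAt

theorem IsDerivChainOn.hasDerivAt (hG : IsDerivChainOn G s) (k : ℕ) {x : 𝕜} (hx : s ∈ 𝓝 x) :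
    HasDerivAt (G k) (G (k + 1) x) x :=
  (hG k x (mem_of_mem_nhds hx)).hasDerivAt hx

theorem IsDerivChainOn.iteratedDerivWithin_eq (hG : IsDerivChainOn G s) (hs : UniqueDiffOn 𝕜 s)
    (m : ℕ) {x : 𝕜} (hx : x ∈ s) : iteratedDerivWithin m (G 0) s x = G m x := by
  induction m generalizing x with
  | zero => rfl
  | succ m ih =>
    rw [iteratedDerivWithin_succ, derivWithin_congr (fun y hy ↦ ih hy) (ih hx)]
    exact (hG m x hx).derivWithin (hs x hx)

theorem IsDerivChainOn.contDiffOn (hG : IsDerivChainOn G s) (hs : UniqueDiffOn 𝕜 s) (k : ℕ) :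
    ContDiffOn 𝕜 ∞ (G k) s := by
  refine contDiffOn_infty.2 fun n ↦ ?_
  induction n generalizing k with
  | zero => exact contDiffOn_zero.2 (hG.continuousOn k)
  | succ n ih =>
    refine (contDiffOn_succ_iff_derivWithin hs).2
      ⟨fun x hx ↦ (hG k x hx).differentiableWithinAt, by simp, (ih (k + 1)).congr ?_⟩
    exact fun x hx ↦ (hG k x hx).derivWithin (hs x hx)

theorem isDerivChainOn_iteratedDerivWithin {f : 𝕜 → E} (hf : ContDiffOn 𝕜 ∞ f s)
    (hs : UniqueDiffOn 𝕜 s) : IsDerivChainOn (fun j ↦ iteratedDerivWithin j f s) s := by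
  intro k x hx
  simp only [iteratedDerivWithin_succ]
  exact ((hf.differentiableOn_iteratedDerivWithin (by exact_mod_cast WithTop.coe_lt_top _) hs)
    x hx).hasDerivWithinAt

end DerivChain

section Endpoints

variable {E : Type*} [NormedAddCommGroup E] [NormedSpace ℝ E]

theorem hasDerivWithinAt_Icc_of_hasDerivAt_Ioo {f f' : ℝ → E} {a b x : ℝ} (hab : a < b)
    (hf : ContinuousOn f (Icc a b)) (hf' : ContinuousOn f' (Icc a b))
    (hderiv : ∀ y ∈ Ioo a b, HasDerivAt f (f' y) y) (hx : x ∈ Icc a b) :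
    HasDerivWithinAt f (f' x) (Icc a b) x := by
  have hdiff : DifferentiableOn ℝ f (Ioo a b) :=
    fun y hy ↦ (hderiv y hy).differentiableAt.differentiableWithinAt
  have hlim : ∀ z ∈ Icc a b, Tendsto (deriv f) (𝓝[Ioo a b] z) (𝓝 (f' z)) := fun z hz ↦
    ((hf' z hz).mono Ioo_subset_Icc_self).congr' <|
      eventually_nhdsWithin_of_forall fun y hy ↦ (hderiv y hy).deriv.symm
  rcases hx.1.eq_or_lt with rfl | hax
  · refine (hasDerivWithinAt_Ici_of_tendsto_deriv hdiff ((hf a hx).mono Ioo_subset_Icc_self)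
      (Ioo_mem_nhdsGT hab) ?_).mono Icc_subset_Ici_self
    simpa [nhdsWithin_Ioo_eq_nhdsGT hab] using hlim a hx
  rcases hx.2.eq_or_lt with rfl | hxb
  · refine (hasDerivWithinAt_Iic_of_tendsto_deriv hdiff ((hf x hx).mono Ioo_subset_Icc_self)
      (Ioo_mem_nhdsLT hab) ?_).mono Icc_subset_Iic_self
    simpa [nhdsWithin_Ioo_eq_nhdsLT hab] using hlim x hx
  exact (hderiv x ⟨hax, hxb⟩).hasDerivWithinAt

end Endpoints

section ScaledMoment

variable {E : Type*} [NormedAddCommGroup E] [NormedSpace ℝ E]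

/-- `ρ^{-(k+1)} ∫₀^ρ t^k g(t) dt = ∫₀¹ s^k g(sρ) ds`; at `ρ = 0` it takes the value of the
right-hand side. -/
def scaledMoment (k : ℕ) (g : ℝ → E) (ρ : ℝ) : E :=
  if ρ = 0 then ((k : ℝ) + 1)⁻¹ • g 0 else (ρ ^ (k + 1))⁻¹ • ∫ t in (0 : ℝ)..ρ, t ^ k • g t

variable {k : ℕ} {g g' : ℝ → E} {r ρ : ℝ}

theorem scaledMoment_at_zero : scaledMoment k g 0 = ((k : ℝ) + 1)⁻¹ • g 0 := if_pos rfl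

theorem scaledMoment_of_ne_zero (hρ : ρ ≠ 0) :
    scaledMoment k g ρ = (ρ ^ (k + 1))⁻¹ • ∫ t in (0 : ℝ)..ρ, t ^ k • g t := if_neg hρ

variable [CompleteSpace E]

theorem norm_scaledMoment_sub_le {ε : ℝ} (hρ : 0 < ρ) (hg : ContinuousOn g (Icc 0 ρ))
    (hε : ∀ t ∈ Ioc 0 ρ, ‖g t - g 0‖ ≤ ε) :
    ‖scaledMoment k g ρ - ((k : ℝ) + 1)⁻¹ • g 0‖ ≤ ε := by
  have hg_int : IntervalIntegrable (fun t ↦ t ^ k • g t) volume 0 ρ :=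
    ((continuous_pow k).continuousOn.smul (hg.mono (uIcc_of_le hρ.le).subset)).intervalIntegrable
  have hdiff : scaledMoment k g ρ - ((k : ℝ) + 1)⁻¹ • g 0 =
      (ρ ^ (k + 1))⁻¹ • ∫ t in (0 : ℝ)..ρ, t ^ k • (g t - g 0) := by
    simp_rw [smul_sub]
    rw [integral_sub hg_int
        ((by fun_prop : Continuous fun t : ℝ ↦ t ^ k • g 0).intervalIntegrable _ _),
      intervalIntegral.integral_smul_const, integral_pow, scaledMoment_of_ne_zero hρ.ne',
      smul_sub, smul_smul]
    congr 2
    field_simp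
    ring
  have hbound : ‖∫ t in (0 : ℝ)..ρ, t ^ k • (g t - g 0)‖ ≤ ρ ^ k * ε * |ρ - 0| := by
    refine norm_integral_le_of_norm_le_const fun t ht ↦ ?_
    rw [uIoc_of_le hρ.le] at ht
    rw [norm_smul, Real.norm_of_nonneg (pow_nonneg ht.1.le k)]
    exact mul_le_mul (pow_le_pow_left₀ ht.1.le ht.2 k) (hε t ht) (norm_nonneg _)
      (pow_nonneg hρ.le k)
  calc ‖scaledMoment k g ρ - ((k : ℝ) + 1)⁻¹ • g 0‖
      ≤ (ρ ^ (k + 1))⁻¹ * (ρ ^ k * ε * |ρ - 0|) := by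
        rw [hdiff, norm_smul, Real.norm_of_nonneg (by positivity)]
        gcongr
    _ = ε := by
        rw [sub_zero, abs_of_pos hρ]
        field_simp
        ring

theorem continuousWithinAt_scaledMoment_at_zero (hr : 0 ≤ r) (hg : ContinuousOn g (Icc 0 r)) :
    ContinuousWithinAt (scaledMoment k g) (Icc 0 r) 0 := by
  refine Metric.continuousWithinAt_iff.2 fun ε hε ↦ ?_
  obtain ⟨δ, hδ, hgδ⟩ :=
    Metric.continuousWithinAt_iff.1 (hg 0 ⟨le_rfl, hr⟩) (ε / 2) (half_pos hε)
  refine ⟨δ, hδ, fun {ρ} hρ hρδ ↦ ?_⟩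
  rcases hρ.1.eq_or_lt with rfl | hρ0
  · simpa using hε
  rw [dist_eq_norm, scaledMoment_at_zero]
  refine (norm_scaledMoment_sub_le hρ0 (hg.mono (Icc_subset_Icc_right hρ.2))
    fun t ht ↦ ?_).trans_lt (half_lt_self hε)
  rw [← dist_eq_norm]
  refine (hgδ ⟨ht.1.le, ht.2.trans hρ.2⟩ (lt_of_le_of_lt ?_ hρδ)).le
  simpa [Real.dist_eq, abs_of_pos ht.1, abs_of_pos hρ0] using ht.2

theorem continuousOn_scaledMoment (hg : ContinuousOn g (Icc 0 r)) :
    ContinuousOn (scaledMoment k g) (Icc 0 r) := by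
  intro x hx
  rcases hx.1.eq_or_lt with rfl | hx0
  · exact continuousWithinAt_scaledMoment_at_zero hx.2 hg
  have hformula : ContinuousWithinAt
      (fun y ↦ (y ^ (k + 1))⁻¹ • ∫ t in (0 : ℝ)..y, t ^ k • g t) (Icc 0 r) x := by
    refine ((continuous_pow (k + 1)).continuousAt.inv₀ (by positivity)).continuousWithinAt.smul ?_
    have hr : 0 ≤ r := hx.1.trans hx.2
    have hint : IntegrableOn (fun t ↦ t ^ k • g t) (uIcc 0 r) := by
      rw [uIcc_of_le hr]
      exact ((continuous_pow k).continuousOn.smul hg).integrableOn_Icc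
    have hprim := continuousOn_primitive_interval hint
    rw [uIcc_of_le hr] at hprim
    exact hprim x hx
  refine hformula.congr_of_eventuallyEq ?_ (scaledMoment_of_ne_zero hx0.ne')
  exact eventually_nhdsWithin_of_eventually_nhds <|
    (eventually_ne_nhds hx0.ne').mono fun y hy ↦ scaledMoment_of_ne_zero hy

theorem integral_pow_succ_smul_deriv (hρ : 0 ≤ ρ) (hg : ContinuousOn g (Icc 0 ρ))
    (hg' : ContinuousOn g' (Icc 0 ρ)) (hderiv : ∀ t ∈ Ioo 0 ρ, HasDerivAt g (g' t) t) :
    ∫ t in (0 : ℝ)..ρ, t ^ (k + 1) • g' t =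
      ρ ^ (k + 1) • g ρ - ((k : ℝ) + 1) • ∫ t in (0 : ℝ)..ρ, t ^ k • g t := by
  have hint : ∀ {j : ℕ} {h : ℝ → E}, ContinuousOn h (Icc 0 ρ) →
      IntervalIntegrable (fun t ↦ t ^ j • h t) volume 0 ρ := fun hh ↦
    ((continuous_pow _).continuousOn.smul hh).intervalIntegrable_of_Icc hρ
  have hint' : IntervalIntegrable (fun t ↦ ((k : ℝ) + 1) • t ^ k • g t) volume 0 ρ :=
    (hint hg).smul _
  have hprod_deriv : ∀ t ∈ Ioo 0 ρ, HasDerivAt (fun x ↦ x ^ (k + 1) • g x)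
      (t ^ (k + 1) • g' t + ((k : ℝ) + 1) • t ^ k • g t) t := fun t ht ↦
    ((hasDerivAt_pow (k + 1) t).smul (hderiv t ht)).congr_deriv (by simp [smul_smul])
  have hprod_cont : ContinuousOn (fun x ↦ x ^ (k + 1) • g x) (Icc 0 ρ) :=
    (continuous_pow (k + 1)).continuousOn.smul hg
  have hprod := integral_eq_sub_of_hasDerivAt_of_le hρ hprod_cont hprod_deriv
    ((hint hg').add hint')
  rw [integral_add (hint hg') hint', intervalIntegral.integral_smul] at hprod
  simp only [zero_pow (Nat.succ_ne_zero k), zero_smul, sub_zero] at hprod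
  rw [← hprod]
  abel

theorem hasDerivAt_scaledMoment (hg : ContinuousOn g (Icc 0 r)) (hg' : ContinuousOn g' (Icc 0 r))
    (hderiv : ∀ t ∈ Ioo 0 r, HasDerivAt g (g' t) t) (hρ : ρ ∈ Ioo 0 r) :
    HasDerivAt (scaledMoment k g) (scaledMoment (k + 1) g' ρ) ρ := by
  have hρ0 : ρ ≠ 0 := hρ.1.ne'
  have hcont : ContinuousOn (fun t ↦ t ^ k • g t) (Icc 0 r) :=
    (continuous_pow k).continuousOn.smul hg
  have hprim : HasDerivAt (fun x ↦ ∫ t in (0 : ℝ)..x, t ^ k • g t) (ρ ^ k • g ρ) ρ :=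
    integral_hasDerivAt_right
      ((hcont.mono (Icc_subset_Icc_right hρ.2.le)).intervalIntegrable_of_Icc hρ.1.le)
      ((hcont.mono Ioo_subset_Icc_self).stronglyMeasurableAtFilter isOpen_Ioo ρ hρ)
      ((continuous_pow k).continuousAt.smul (hderiv ρ hρ).continuousAt)
  have hinv : HasDerivAt (fun x : ℝ ↦ (x ^ (k + 1))⁻¹)
      (-(((k : ℝ) + 1) * ρ ^ k) / (ρ ^ (k + 1)) ^ 2) ρ :=
    ((hasDerivAt_pow (k + 1) ρ).fun_inv (pow_ne_zero _ hρ0)).congr_deriv (by simp)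
  have hloc : scaledMoment k g =ᶠ[𝓝 ρ]
      fun x ↦ (x ^ (k + 1))⁻¹ • ∫ t in (0 : ℝ)..x, t ^ k • g t :=
    (eventually_ne_nhds hρ0).mono fun x hx ↦ scaledMoment_of_ne_zero hx
  refine (hinv.smul hprim).congr_of_eventuallyEq hloc |>.congr_deriv ?_
  rw [scaledMoment_of_ne_zero hρ0, integral_pow_succ_smul_deriv hρ.1.le
    (hg.mono (Icc_subset_Icc_right hρ.2.le)) (hg'.mono (Icc_subset_Icc_right hρ.2.le))
    fun t ht ↦ hderiv t ⟨ht.1, ht.2.trans hρ.2⟩]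
  match_scalars <;> field_simp <;> ring

theorem scaledMoment_zero_eq_slope {h : ℝ → E} (hρ : 0 < ρ) (hh : ContinuousOn h (Icc 0 ρ))
    (hg : ContinuousOn g (Icc 0 ρ)) (hderiv : ∀ t ∈ Ioo 0 ρ, HasDerivAt h (g t) t) :
    scaledMoment 0 g ρ = slope h 0 ρ := by
  rw [scaledMoment_of_ne_zero hρ.ne', slope_def_module,
    ← integral_eq_sub_of_hasDerivAt_of_le hρ.le hh hderiv (hg.intervalIntegrable_of_Icc hρ.le)]
  simp

theorem IsDerivChainOn.scaledMoment {φ : ℕ → ℝ → E} (hr : 0 < r)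
    (hφ : IsDerivChainOn φ (Icc 0 r)) :
    IsDerivChainOn (fun k ↦ scaledMoment k (φ k)) (Icc 0 r) := fun k _ hx ↦
  hasDerivWithinAt_Icc_of_hasDerivAt_Ioo hr (continuousOn_scaledMoment (hφ.continuousOn k))
    (continuousOn_scaledMoment (hφ.continuousOn (k + 1)))
    (fun _ hy ↦ hasDerivAt_scaledMoment (hφ.continuousOn k) (hφ.continuousOn (k + 1))
      (fun _ ht ↦ hφ.hasDerivAt k (Icc_mem_nhds ht.1 ht.2)) hy) hx

end ScaledMoment

/-- for `f ∈ C^∞_ev([0,r])`, the function `ρ ↦ ρ⁻¹ f'(ρ)` on `(0,r]`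
extends to a function `Df ∈ C^∞_ev([0,r])`. -/
theorem D_maps_smoothEven_to_smoothEven (r : ℝ) (hr : 0 < r) (f : ℝ → ℂ)
    (hf : SmoothEvenOn r f) :
    ∃ Df : ℝ → ℂ, SmoothEvenOn r Df ∧
      ∀ ρ ∈ Ioc (0 : ℝ) r, Df ρ = ρ⁻¹ * derivWithin f (Icc 0 r) ρ := by
  obtain ⟨hsmooth, hodd⟩ := hf
  have hs : UniqueDiffOn ℝ (Icc 0 r) := uniqueDiffOn_Icc hr
  have hF := isDerivChainOn_iteratedDerivWithin hsmooth hs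
  have hF₂ : IsDerivChainOn (fun k ↦ iteratedDerivWithin (k + 2) f (Icc 0 r)) (Icc 0 r) :=
    fun k ↦ hF (k + 2)
  have hG := hF₂.scaledMoment hr
  refine ⟨scaledMoment 0 (iteratedDerivWithin 2 f (Icc 0 r)),
    ⟨hG.contDiffOn hs 0, fun n ↦ ?_⟩, fun ρ hρ ↦ ?_⟩
  · rw [hG.iteratedDerivWithin_eq hs _ (left_mem_Icc.2 hr.le), scaledMoment_at_zero,
      show 2 * n + 1 + 2 = 2 * (n + 1) + 1 by ring, hodd, smul_zero]
  · rw [scaledMoment_zero_eq_slope hρ.1 ((hF.continuousOn 1).mono (Icc_subset_Icc_right hρ.2))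
      ((hF.continuousOn 2).mono (Icc_subset_Icc_right hρ.2))
      (fun t ht ↦ hF.hasDerivAt 1 (Icc_mem_nhds ht.1 (ht.2.trans_le hρ.2))),
      slope_def_module, show (1 : ℕ) = 2 * 0 + 1 from rfl, hodd, iteratedDerivWithin_one]
    simp [Complex.real_smul]
end
end

section
/- Let d ≥ 2 and n ≥ 1 be integers and r > 0. Let φ be a smooth radially symmetric function on closure(B^d_r) with radial profile f ∈ C^∞_ev([0,r]) (φ(x) = f(|x|)). Then for every d-index I = (i₁,…,i_n) ∈ {1,…,d}^n and every x ∈ closure(B^d_r): ∂_{i₁}⋯∂_{i_n} φ(x) = Σ_{j=0}^{⌊n/2⌋} p^j_I(x) (D^{n−j} f)(|x|), where p^j_I(x) = (1/(2^j j!)) Δ^j (x_{i₁}⋯x_{i_n}) and Δ is the Laplace operator acting on the polynomial x ↦ x_{i₁}⋯x_{i_n}. -/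
open MeasureTheory Metric Set

noncomputable section

/-!
Write `∂_I φ (x) = ∑_{j + k = n} q_j(x) g_k(‖x‖)` with `q_j = Δʲ(x_{i₁} ⋯ x_{iₙ}) / (2ʲ j!)`.
Since `g_k' (ρ) = ρ g_{k+1}(ρ)`, differentiating `y ↦ g_k(‖y‖)` in the direction `eᵢ` gives
`xᵢ g_{k+1}(‖x‖)`, also at the origin, where `g_k'(0) = 0`. The commutation rule
`Δʲ⁺¹(Xᵢ P) = Xᵢ Δʲ⁺¹ P + 2(j+1) ∂ᵢ Δʲ P` then regroups `∂ᵢ` of the expansion for `I` into the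
expansion for `(i, I)`, so the formula follows by induction on the length of `I`. Terms with
`2j > n` vanish because `x_{i₁} ⋯ x_{iₙ}` is homogeneous of degree `n`.
-/

open Finset

namespace MvPolynomial

section CommRing

variable {σ R : Type*} [CommRing R]

theorem pderiv_pderiv_comm (i j : σ) (p : MvPolynomial σ R) :
    pderiv i (pderiv j p) = pderiv j (pderiv i p) := by
  have h : ⁅pderiv i, pderiv j⁆ = (0 : Derivation R (MvPolynomial σ R) (MvPolynomial σ R)) :=
    derivation_ext fun k => by
      classical
      rw [Derivation.commutator_apply, pderiv_X, pderiv_X, Pi.single_apply, Pi.single_apply]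
      split_ifs <;> simp
  have := congr($h p)
  rwa [Derivation.commutator_apply, Derivation.zero_apply, sub_eq_zero] at this

variable [Fintype σ]

def laplacian : Module.End R (MvPolynomial σ R) :=
  ∑ i, (pderiv i).toLinearMap * (pderiv i).toLinearMap

theorem laplacian_apply (p : MvPolynomial σ R) :
    laplacian p = ∑ i, pderiv i (pderiv i p) := by
  simp [laplacian]

theorem commute_laplacian_pderiv (i : σ) :
    Commute laplacian ((pderiv i).toLinearMap : Module.End R (MvPolynomial σ R)) :=
  LinearMap.ext fun p => by simp [laplacian_apply, pderiv_pderiv_comm i]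

theorem laplacian_X_mul (i : σ) (p : MvPolynomial σ R) :
    laplacian (X i * p) = X i * laplacian p + 2 • pderiv i p := by
  classical
  simp only [laplacian_apply, Derivation.leibniz, smul_eq_mul, pderiv_X, Pi.single_apply, mul_ite,
    mul_one, mul_zero, map_add, sum_add_distrib, sum_ite_eq, Finset.mem_univ, ↓reduceIte, mul_sum,
    nsmul_eq_mul, Nat.cast_ofNat, apply_ite (pderiv _), map_zero]
  ring

theorem laplacian_pow_X_mul (i : σ) (j : ℕ) (p : MvPolynomial σ R) :
    (laplacian ^ (j + 1)) (X i * p) =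
      X i * (laplacian ^ (j + 1)) p + (2 * (j + 1)) • pderiv i ((laplacian ^ j) p) := by
  induction j with
  | zero => simpa using laplacian_X_mul i p
  | succ j ih =>
    have hcomm : laplacian (pderiv i ((laplacian ^ j) p)) = pderiv i ((laplacian ^ (j + 1)) p) := by
      rw [pow_succ', Module.End.mul_apply]
      exact congr($(commute_laplacian_pderiv (R := R) i) ((laplacian ^ j) p))
    rw [pow_succ', Module.End.mul_apply, ih, map_add, map_nsmul, laplacian_X_mul, hcomm,
      ← Module.End.mul_apply, ← pow_succ', add_assoc, ← add_nsmul,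
      show 2 + 2 * (j + 1) = 2 * (j + 1 + 1) by ring]

theorem isHomogeneous_laplacian {p : MvPolynomial σ R} {n : ℕ} (hp : p.IsHomogeneous n) :
    (laplacian p).IsHomogeneous (n - 2) := by
  rw [laplacian_apply]
  exact IsHomogeneous.sum _ _ _ fun i _ => hp.pderiv.pderiv

theorem laplacian_eq_zero_of_isHomogeneous {p : MvPolynomial σ R} {n : ℕ}
    (hp : p.IsHomogeneous n) (hn : n < 2) : laplacian p = 0 := by
  rw [laplacian_apply]
  refine Finset.sum_eq_zero fun i _ => ?_
  have hdeg : (pderiv i p).totalDegree = 0 := by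
    have := (hp.pderiv (i := i)).totalDegree_le
    omega
  rw [totalDegree_eq_zero_iff_eq_C.mp hdeg, pderiv_C]

theorem laplacian_pow_eq_zero_of_isHomogeneous {p : MvPolynomial σ R} {n j : ℕ}
    (hp : p.IsHomogeneous n) (hj : n < 2 * j) : (laplacian ^ j) p = 0 := by
  induction j generalizing n p with
  | zero => omega
  | succ j ih =>
    rw [pow_succ, Module.End.mul_apply]
    rcases lt_or_ge n 2 with hn | hn
    · rw [laplacian_eq_zero_of_isHomogeneous hp hn, map_zero]
    · exact ih (isHomogeneous_laplacian hp) (by omega)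

end CommRing

section Field

variable {σ K : Type*} [Fintype σ] [Field K]

/-- For `p = X_{i₁} ⋯ X_{iₙ}` this is the polynomial `p^j_I` of the statement. -/
def scaledLaplacianPow (j : ℕ) (p : MvPolynomial σ K) : MvPolynomial σ K :=
  (2 ^ j * j.factorial : K)⁻¹ • (laplacian ^ j) p

@[simp]
theorem scaledLaplacianPow_zero (p : MvPolynomial σ K) : scaledLaplacianPow 0 p = p := by
  simp [scaledLaplacianPow]

theorem scaledLaplacianPow_succ_X_mul [CharZero K] (i : σ) (j : ℕ) (p : MvPolynomial σ K) :
    scaledLaplacianPow (j + 1) (X i * p) =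
      X i * scaledLaplacianPow (j + 1) p + pderiv i (scaledLaplacianPow j p) := by
  simp only [scaledLaplacianPow, laplacian_pow_X_mul, smul_add, mul_smul_comm,
    Derivation.map_smul, ← Nat.cast_smul_eq_nsmul K, smul_smul]
  congr 2
  push_cast [Nat.factorial_succ, pow_succ]
  field_simp

theorem scaledLaplacianPow_eq_zero_of_isHomogeneous {p : MvPolynomial σ K} {n j : ℕ}
    (hp : p.IsHomogeneous n) (hj : n < 2 * j) : scaledLaplacianPow j p = 0 := by
  rw [scaledLaplacianPow, laplacian_pow_eq_zero_of_isHomogeneous hp hj, smul_zero]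

open Finset.Nat in
theorem sum_antidiagonal_scaledLaplacianPow_X_mul [CharZero K] {A : Type*} [CommRing A]
    (ψ : MvPolynomial σ K →+* A) (c : ℕ → A) {p : MvPolynomial σ K} {n : ℕ}
    (hp : p.IsHomogeneous n) (i : σ) :
    ∑ q ∈ antidiagonal (n + 1), ψ (scaledLaplacianPow q.1 (X i * p)) * c q.2 =
      ∑ q ∈ antidiagonal n, (ψ (pderiv i (scaledLaplacianPow q.1 p)) * c q.2 +
        ψ (X i) * ψ (scaledLaplacianPow q.1 p) * c (q.2 + 1)) := by
  -- Peeling off either end of `antidiagonal (n + 1)` shifts the index of `ψ (X i) * …` from the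
  -- polynomial to `c`; the top term vanishes by homogeneity.
  have h := sum_antidiagonal_succ (n := n)
    (f := fun q => ψ (X i) * ψ (scaledLaplacianPow q.1 p) * c q.2)
  rw [sum_antidiagonal_succ', scaledLaplacianPow_eq_zero_of_isHomogeneous hp (by omega)] at h
  simp only [sum_antidiagonal_succ, scaledLaplacianPow_zero, scaledLaplacianPow_succ_X_mul,
    map_add, map_mul, map_zero, add_mul, Finset.sum_add_distrib] at h ⊢
  linear_combination -h

end Field

theorem hasFDerivAt_eval_clm {𝕜 E σ : Type*} [NontriviallyNormedField 𝕜]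
    [NormedAddCommGroup E] [NormedSpace 𝕜 E] [Fintype σ] (ℓ : σ → E →L[𝕜] 𝕜)
    (p : MvPolynomial σ 𝕜) (x : E) :
    HasFDerivAt (fun y => eval (fun i => ℓ i y) p)
      (∑ i, eval (fun i => ℓ i x) (pderiv i p) • ℓ i) x := by
  classical
  induction p using MvPolynomial.induction_on with
  | C a =>
    simp only [eval_C]
    refine (hasFDerivAt_const a x).congr_fderiv ?_
    ext v
    simp
  | add p q hp hq =>
    simp only [map_add]
    refine (hp.fun_add hq).congr_fderiv ?_
    ext v
    simp [add_mul, Finset.sum_add_distrib]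
  | mul_X p i hp =>
    simp only [map_mul, eval_X]
    refine (hp.fun_mul (ℓ i).hasFDerivAt).congr_fderiv ?_
    ext v
    simp [pderiv_X, Pi.single_apply, apply_ite (eval _), add_mul, ite_mul, Finset.sum_add_distrib,
      Finset.mul_sum, mul_assoc]

end MvPolynomial

open MvPolynomial

theorem hasFDerivWithinAt_comp_norm_s7 {E F : Type*} [NormedAddCommGroup E] [InnerProductSpace ℝ E]
    [NormedAddCommGroup F] [NormedSpace ℝ F] {G : ℝ → F} {c : F} {s : Set E} {t : Set ℝ} {x : E}
    (hst : MapsTo (‖·‖) s t) (hG : HasDerivWithinAt G (‖x‖ • c) t ‖x‖) :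
    HasFDerivWithinAt (fun y => G ‖y‖) ((innerSL ℝ x).smulRight c) s x := by
  rcases eq_or_ne x 0 with rfl | hx
  · -- The norm is not differentiable at `0`, but `G' 0 = 0` gives `G ‖y‖ - G 0 = o(‖y‖)`.
    rw [norm_zero, zero_smul] at hG
    have hlim : Filter.Tendsto (‖·‖) (nhdsWithin (0 : E) s) (nhdsWithin 0 t) := by
      simpa using (continuous_norm.continuousWithinAt (x := (0 : E))).tendsto_nhdsWithin hst
    have ho := (hasDerivWithinAt_iff_isLittleO.mp hG).comp_tendsto hlim
    refine .of_isLittleO ?_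
    simp only [sub_zero, Function.comp_def] at ho
    simpa using
      ho.trans_isBigO (Asymptotics.isBigO_refl (fun y : E => y) (nhdsWithin 0 s)).norm_left
  · have hnorm : HasFDerivAt (‖·‖) (‖x‖⁻¹ • innerSL ℝ x) x := by
      have h := (hasStrictFDerivAt_norm_sq x).hasFDerivAt.sqrt (by positivity)
      simp only [Real.sqrt_sq (norm_nonneg _)] at h
      refine h.congr_fderiv ?_
      ext v
      simp only [smul_apply, innerSL_apply_apply, smul_eq_mul, nsmul_eq_mul, Nat.cast_ofNat]
      field_simp
    refine (hG.hasFDerivWithinAt.comp x hnorm.hasFDerivWithinAt hst).congr_fderiv ?_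
    ext v
    have hx' : ‖x‖ ≠ 0 := norm_ne_zero_iff.mpr hx
    simp only [ContinuousLinearMap.coe_comp, Function.comp_apply, smul_apply,
      ContinuousLinearMap.toSpanSingleton_apply, ContinuousLinearMap.smulRight_apply,
      innerSL_apply_apply, smul_smul, smul_eq_mul]
    congr 1
    field_simp

section Euclidean

variable {ι : Type*} [Fintype ι]

theorem hasFDerivAt_eval_euclidean (p : MvPolynomial ι ℝ) (x : EuclideanSpace ℝ ι) :
    HasFDerivAt (fun y : EuclideanSpace ℝ ι => eval (fun k => y k) p)
      (∑ k, eval (fun k => x k) (pderiv k p) • (EuclideanSpace.proj k : StrongDual ℝ _)) x := by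
  simpa using hasFDerivAt_eval_clm (EuclideanSpace.proj (𝕜 := ℝ) (ι := ι)) p x

theorem fderiv_eval_single [DecidableEq ι] (p : MvPolynomial ι ℝ) (x : EuclideanSpace ℝ ι)
    (i : ι) :
    fderiv ℝ (fun y : EuclideanSpace ℝ ι => eval (fun k => y k) p) x
      (EuclideanSpace.single i 1) = eval (fun k => x k) (pderiv i p) := by
  simp [(hasFDerivAt_eval_euclidean p x).fderiv]

theorem hasFDerivWithinAt_eval_mul_comp_norm {s : Set (EuclideanSpace ℝ ι)} {t : Set ℝ}
    {x : EuclideanSpace ℝ ι} (hst : MapsTo (‖·‖) s t) (p : MvPolynomial ι ℝ) {G : ℝ → ℂ} {c : ℂ}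
    (hG : HasDerivWithinAt G (‖x‖ • c) t ‖x‖) :
    HasFDerivWithinAt (fun y : EuclideanSpace ℝ ι => (eval (fun k => y k) p : ℂ) * G ‖y‖)
      ((eval (fun k => x k) p : ℂ) • (innerSL ℝ x).smulRight c + G ‖x‖ • Complex.ofRealCLM.comp
        (∑ k, eval (fun k => x k) (pderiv k p) • (EuclideanSpace.proj k : StrongDual ℝ _))) s x :=
  (Complex.ofRealCLM.hasFDerivAt.comp x (hasFDerivAt_eval_euclidean p x)).hasFDerivWithinAt.fun_mul
    (hasFDerivWithinAt_comp_norm_s7 hst hG)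

end Euclidean

theorem lap_iterate_eval {d : ℕ} (j : ℕ) (p : MvPolynomial (Fin d) ℝ) :
    (lap d)^[j] (fun y => eval (fun k => y k) p) =
      fun y => eval (fun k => y k) ((laplacian ^ j) p) := by
  induction j with
  | zero => rfl
  | succ j ih =>
    ext x
    simp only [Function.iterate_succ_apply', ih, lap, fderiv_eval_single, pow_succ',
      Module.End.mul_apply, laplacian_apply, map_sum]

theorem pP_eq_eval {d n : ℕ} (j : ℕ) (I : Fin n → Fin d) (x : EuclideanSpace ℝ (Fin d)) :
    pP d n j I x = eval (fun k => x k) (scaledLaplacianPow j (∏ k, X (I k))) := by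
  have h : (fun y : EuclideanSpace ℝ (Fin d) => ∏ k, y (I k)) =
      fun y => eval (fun k => y k) (∏ k, X (I k)) := by
    simp
  rw [pP, h, lap_iterate_eval, scaledLaplacianPow, smul_eval, one_div]

theorem pP_eq_zero {d n j : ℕ} (I : Fin n → Fin d) (hj : n < 2 * j) : pP d n j I = 0 := by
  have hhom : (∏ k, X (I k) : MvPolynomial (Fin d) ℝ).IsHomogeneous n := by
    simpa using IsHomogeneous.prod univ _ (fun _ => 1) fun k _ => isHomogeneous_X ℝ (I k)
  ext x
  rw [pP_eq_eval, scaledLaplacianPow_eq_zero_of_isHomogeneous hhom hj, map_zero, Pi.zero_apply]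

theorem DIter.smoothEvenOn {r : ℝ} {f : ℝ → ℂ} {g : ℕ → ℝ → ℂ} (hf : SmoothEvenOn r f)
    (hg : DIter r f g) : ∀ k, SmoothEvenOn r (g k)
  | 0 => hg.1 ▸ hf
  | k + 1 => (hg.2 k).1

theorem DIter.hasDerivWithinAt {r : ℝ} {f : ℝ → ℂ} {g : ℕ → ℝ → ℂ} (hf : SmoothEvenOn r f)
    (hg : DIter r f g) (k : ℕ) {ρ : ℝ} (hρ : ρ ∈ Icc 0 r) :
    HasDerivWithinAt (g k) (ρ • g (k + 1) ρ) (Icc 0 r) ρ := by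
  have hsm := hg.smoothEvenOn hf k
  suffices h : ρ • g (k + 1) ρ = derivWithin (g k) (Icc 0 r) ρ by
    rw [h]
    exact ((hsm.1.differentiableOn (by simp)) ρ hρ).hasDerivWithinAt
  rcases hρ.1.eq_or_lt with rfl | hpos
  · simpa using (hsm.2 0).symm
  · rw [(hg.2 k).2 ρ ⟨hpos, hρ.2⟩, Complex.real_smul, ← mul_assoc, ← Complex.ofReal_mul,
      mul_inv_cancel₀ hpos.ne', Complex.ofReal_one, one_mul]

theorem pderivB_congr {d : ℕ} {r : ℝ} {i : Fin d} {φ ψ : EuclideanSpace ℝ (Fin d) → ℂ}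
    {x : EuclideanSpace ℝ (Fin d)} (h : EqOn φ ψ (closedBall 0 r)) (hx : x ∈ closedBall 0 r) :
    pderivB d r i φ x = pderivB d r i ψ x := by
  simp only [pderivB, fderivWithin_congr h (h hx)]

theorem pderivB_sum_antidiagonal {d n : ℕ} {r : ℝ} (hr : 0 < r) {g : ℕ → ℝ → ℂ}
    (hg : ∀ k, ∀ ρ ∈ Icc 0 r, HasDerivWithinAt (g k) (ρ • g (k + 1) ρ) (Icc 0 r) ρ)
    {p : MvPolynomial (Fin d) ℝ} (hp : p.IsHomogeneous n) (i : Fin d)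
    {x : EuclideanSpace ℝ (Fin d)} (hx : x ∈ closedBall 0 r) :
    pderivB d r i (fun y => ∑ q ∈ antidiagonal n,
        (eval (fun k => y k) (scaledLaplacianPow q.1 p) : ℂ) * g q.2 ‖y‖) x =
      ∑ q ∈ antidiagonal (n + 1),
        (eval (fun k => x k) (scaledLaplacianPow q.1 (X i * p)) : ℂ) * g q.2 ‖x‖ := by
  have hnorm : MapsTo (‖·‖) (closedBall (0 : EuclideanSpace ℝ (Fin d)) r) (Icc 0 r) :=
    fun y hy => ⟨norm_nonneg y, mem_closedBall_zero_iff.mp hy⟩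
  have hunique : UniqueDiffOn ℝ (closedBall (0 : EuclideanSpace ℝ (Fin d)) r) :=
    uniqueDiffOn_convex (convex_closedBall _ _) (by simp [interior_closedBall _ hr.ne', hr])
  have hsum := sum_antidiagonal_scaledLaplacianPow_X_mul
    (Complex.ofRealHom.comp (eval fun k => x k)) (fun k => g k ‖x‖) hp i
  simp only [RingHom.coe_comp, Function.comp_apply, Complex.ofRealHom_eq_coe, eval_X] at hsum
  rw [pderivB, (HasFDerivWithinAt.fun_sum fun q _ => hasFDerivWithinAt_eval_mul_comp_norm hnorm
      (scaledLaplacianPow q.1 p) (hg q.2 ‖x‖ (hnorm hx))).fderivWithin (hunique x hx),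
    hsum, FunLike.coe_sum, Finset.sum_apply]
  refine Finset.sum_congr rfl fun q _ => ?_
  simp only [add_apply, smul_apply, ContinuousLinearMap.smulRight_apply, coe_innerSL_apply,
    EuclideanSpace.inner_single_right, Real.ringHom_apply, one_mul, Complex.real_smul, smul_eq_mul,
    ContinuousLinearMap.comp_apply, _root_.sum_apply, PiLp.proj_apply, PiLp.single_apply, mul_ite,
    mul_one, mul_zero, sum_ite_eq', Finset.mem_univ, ↓reduceIte, Complex.ofRealCLM_apply]
  ring

theorem pderivList_eq_sum_antidiagonal {d : ℕ} {r : ℝ} (hr : 0 < r)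
    {φ : EuclideanSpace ℝ (Fin d) → ℂ} {g : ℕ → ℝ → ℂ}
    (hg : ∀ k, ∀ ρ ∈ Icc 0 r, HasDerivWithinAt (g k) (ρ • g (k + 1) ρ) (Icc 0 r) ρ)
    (hφ : ∀ x ∈ closedBall (0 : EuclideanSpace ℝ (Fin d)) r, φ x = g 0 ‖x‖) (L : List (Fin d)) :
    ∀ x ∈ closedBall (0 : EuclideanSpace ℝ (Fin d)) r, pderivList d r L φ x =
      ∑ q ∈ antidiagonal L.length,
        (eval (fun k => x k) (scaledLaplacianPow q.1 (L.map X).prod) : ℂ) * g q.2 ‖x‖ := by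
  induction L with
  | nil => intro x hx; simp [pderivList, hφ x hx]
  | cons i L ih =>
    intro x hx
    have hhom : ((L.map X).prod : MvPolynomial (Fin d) ℝ).IsHomogeneous L.length := by
      simpa using IsHomogeneous.prod univ _ (fun _ => 1) fun k _ => isHomogeneous_X ℝ (L.get k)
    rw [List.map_cons, List.prod_cons, List.length_cons,
      ← pderivB_sum_antidiagonal hr hg hhom i hx]
    exact pderivB_congr ih hx

theorem pderiv_dIndex_radial_formula_general (d n : ℕ) (r : ℝ) (hr : 0 < r)
    (φ : EuclideanSpace ℝ (Fin d) → ℂ) (f : ℝ → ℂ) (g : ℕ → ℝ → ℂ)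
    (hf : SmoothEvenOn r f)
    (hprof : ∀ x ∈ closedBall (0 : EuclideanSpace ℝ (Fin d)) r, φ x = f ‖x‖)
    (hg : DIter r f g)
    (I : Fin n → Fin d)
    (x : EuclideanSpace ℝ (Fin d)) (hx : x ∈ closedBall (0 : EuclideanSpace ℝ (Fin d)) r) :
    pderivList d r (List.ofFn I) φ x =
      ∑ j ∈ Finset.range (n / 2 + 1), ((pP d n j I x : ℝ) : ℂ) * g (n - j) ‖x‖ := by
  have hexp := pderivList_eq_sum_antidiagonal hr (fun k _ => hg.hasDerivWithinAt hf k)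
    (fun y hy => hg.1 ▸ hprof y hy) (List.ofFn I) x hx
  simp only [List.map_ofFn, List.prod_ofFn, Function.comp_apply, List.length_ofFn,
    Finset.Nat.sum_antidiagonal_eq_sum_range_succ_mk, ← pP_eq_eval] at hexp
  rw [hexp]
  refine (Finset.sum_subset (range_subset_range.2 (by omega : n / 2 + 1 ≤ n + 1))
    fun j _ hj => ?_).symm
  rw [pP_eq_zero I (by simp at hj; omega), Pi.zero_apply, Complex.ofReal_zero, zero_mul]

/-- for smooth radial `φ(x) = f(|x|)` and any `d`-index `I` of length
`n ≥ 1`, `∂_{i₁}⋯∂_{i_n} φ(x) = ∑_{j=0}^{⌊n/2⌋} p^j_I(x) (D^{n-j} f)(|x|)` with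
`p^j_I(x) = (1/(2^j j!)) Δ^j (x_{i₁}⋯x_{i_n})`. -/
theorem pderiv_dIndex_radial_formula (d n : ℕ) (hd : 2 ≤ d) (hn : 1 ≤ n) (r : ℝ) (hr : 0 < r)
    (φ : EuclideanSpace ℝ (Fin d) → ℂ) (f : ℝ → ℂ) (g : ℕ → ℝ → ℂ)
    (hφ : ContDiffOn ℝ (⊤ : ℕ∞) φ (closedBall 0 r))
    (hf : SmoothEvenOn r f)
    (hprof : ∀ x ∈ closedBall (0 : EuclideanSpace ℝ (Fin d)) r, φ x = f ‖x‖)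
    (hg : DIter r f g)
    (I : Fin n → Fin d)
    (x : EuclideanSpace ℝ (Fin d)) (hx : x ∈ closedBall (0 : EuclideanSpace ℝ (Fin d)) r) :
    pderivList d r (List.ofFn I) φ x =
      ∑ j ∈ Finset.range (n / 2 + 1), ((pP d n j I x : ℝ) : ℂ) * g (n - j) ‖x‖ :=
  pderiv_dIndex_radial_formula_general d n r hr φ f g hf hprof hg I x hx
end
end
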